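/- arXiv:2109.08280 — 4 statements merged into one kernel-verified Lean document; each statement's English description precedes it below -/
import Mathlib

section
/- There exists a universal constant C > 0 (independent of m and n) such that for every matrix A ∈ ℝ^{m×n} and every matrix U ∈ ℝ^{n×n} with Frobenius norm satisfying ‖U‖_F² = n, if ξ is a standard Gaussian vector in ℝⁿ then disc_s(A) ≤ C · E‖A U ξ‖_∞. In other words, the spherical discrepancy is bounded, up to a universal constant, by the infimum of E‖Ag‖_∞ over centered Gaussian vectors g in ℝⁿ whose covariance matrix has trace n. -/
open MeasureTheory ProbabilityTheory

/-- The ℓ∞ norm of a vector in ℝ^m. -/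
noncomputable def supNorm {m : ℕ} (v : Fin m → ℝ) : ℝ := ⨆ i, |v i|

/-- The Euclidean norm of a vector in ℝ^n. -/
noncomputable def e2 {n : ℕ} (x : Fin n → ℝ) : ℝ := Real.sqrt (∑ j, x j ^ 2)

/-- The standard Gaussian measure on ℝ^n (i.i.d. N(0,1) coordinates). -/
noncomputable def stdGaussian (n : ℕ) : Measure (Fin n → ℝ) :=
  Measure.pi fun _ => gaussianReal 0 1

/-- Spherical discrepancy: min over x with ‖x‖₂ = √n of ‖Ax‖_∞. -/
noncomputable def discS {m n : ℕ} (A : Matrix (Fin m) (Fin n) ℝ) : ℝ :=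
  sInf { d | ∃ x : Fin n → ℝ, e2 x = Real.sqrt n ∧ d = supNorm (A.mulVec x) }

open Polynomial
open scoped NNReal ENNReal Matrix

/-!
Rescaling any `x ≠ 0` to the sphere of radius `√n` gives `discS A * ‖x‖₂ ≤ √n * ‖A x‖_∞`.
Applied to `x = U ξ` and integrated, this gives `discS A * E‖Uξ‖₂ ≤ √n * E‖AUξ‖_∞`, so it
suffices to show `E‖Uξ‖₂ ≥ √(n / 3)`. Put `N = ‖Uξ‖₂`. Each `(Uξ)_k` is a centred Gaussian
whose fourth moment is three times its squared variance, so `E N² = ‖U‖_F² = n` and, by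
Cauchy–Schwarz, `E N⁴ ≤ 3 n²`. Integrating `3 s² N² ≤ 2 s³ N + N⁴` at `s = √(3 n)` turns these
two moments into `√n ≤ √3 E N`. Hence `C = √3` works.
-/

section MomentInequalities

variable {Ω : Type*} [MeasurableSpace Ω] {μ : Measure Ω}

lemma integral_mul_le_sqrt_mul_sqrt {f g : Ω → ℝ} (hf0 : 0 ≤ f) (hg0 : 0 ≤ g)
    (hf : MemLp f 2 μ) (hg : MemLp g 2 μ) :
    ∫ ω, f ω * g ω ∂μ ≤ √(∫ ω, f ω ^ 2 ∂μ) * √(∫ ω, g ω ^ 2 ∂μ) := by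
  have h := integral_mul_le_Lp_mul_Lq_of_nonneg Real.HolderConjugate.two_two
    (Filter.Eventually.of_forall hf0) (Filter.Eventually.of_forall hg0)
    (by simpa using hf) (by simpa using hg)
  simpa [Real.sqrt_eq_rpow] using h

lemma integral_sq_sum_le {κ : Type*} (s : Finset κ) {Z : κ → Ω → ℝ} (hZ0 : ∀ i, 0 ≤ Z i)
    (hZ : ∀ i, MemLp (Z i) 2 μ) :
    ∫ ω, (∑ i ∈ s, Z i ω) ^ 2 ∂μ ≤ (∑ i ∈ s, √(∫ ω, Z i ω ^ 2 ∂μ)) ^ 2 := by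
  have hint : ∀ i j, Integrable (fun ω => Z i ω * Z j ω) μ := fun i j =>
    (hZ i).integrable_mul (hZ j)
  simp_rw [sq, Finset.sum_mul_sum]
  rw [integral_finsetSum _ fun i _ => integrable_finsetSum _ fun j _ => hint i j]
  refine Finset.sum_le_sum fun i _ => ?_
  rw [integral_finsetSum _ fun j _ => hint i j]
  refine Finset.sum_le_sum fun j _ => ?_
  simpa only [sq] using integral_mul_le_sqrt_mul_sqrt (hZ0 i) (hZ0 j) (hZ i) (hZ j)

lemma sqrt_integral_sq_le_of_integral_pow_four_le [IsFiniteMeasure μ] {X : Ω → ℝ}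
    (hX0 : 0 ≤ X) (hX : MemLp X 4 μ) (h4 : ∫ ω, X ω ^ 4 ∂μ ≤ 3 * (∫ ω, X ω ^ 2 ∂μ) ^ 2) :
    √(∫ ω, X ω ^ 2 ∂μ) ≤ √3 * ∫ ω, X ω ∂μ := by
  set a := ∫ ω, X ω ^ 2 ∂μ
  set m := ∫ ω, X ω ∂μ
  have ha : 0 ≤ a := integral_nonneg fun ω => sq_nonneg _
  have hX1 : Integrable X μ := hX.integrable (by norm_num)
  have hX2 : Integrable (fun ω => X ω ^ 2) μ :=
    (hX.mono_exponent (by norm_num : (2 : ℝ≥0∞) ≤ 4)).integrable_sq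
  have hX4 : Integrable (fun ω => X ω ^ 4) μ := by
    simpa [Real.norm_of_nonneg (hX0 _)] using hX.integrable_norm_pow (p := 4) (by norm_num)
  -- `3 s² x² ≤ 2 s³ x + x⁴` for `x ≥ 0`, since the difference is `x (x - s)² (x + 2 s)`
  have key : ∀ s ≥ 0, 3 * s ^ 2 * a ≤ 2 * s ^ 3 * m + ∫ ω, X ω ^ 4 ∂μ := fun s hs => by
    rw [← integral_const_mul, ← integral_const_mul, ← integral_add (hX1.const_mul _) hX4]
    refine integral_mono (hX2.const_mul _) ((hX1.const_mul _).add hX4) fun ω => ?_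
    have hx : 0 ≤ X ω := hX0 ω
    nlinarith [mul_nonneg (mul_nonneg hx (sq_nonneg (X ω - s))) (by linarith : 0 ≤ X ω + 2 * s)]
  rcases ha.eq_or_lt with ha0 | ha0
  · rw [← ha0, Real.sqrt_zero]
    exact mul_nonneg (Real.sqrt_nonneg 3) (integral_nonneg hX0)
  have hsa : 0 < √a := Real.sqrt_pos.2 ha0
  have hs := key (√3 * √a) (by positivity)
  have hsq : (√3 * √a) ^ 2 = 3 * a := by
    rw [mul_pow, Real.sq_sqrt (by norm_num), Real.sq_sqrt ha]
  have hcube : (√3 * √a) ^ 3 = 3 * a * (√3 * √a) := by rw [pow_succ, hsq]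
  rw [hsq, hcube] at hs
  have h1 : a * a ≤ a * (√a * (√3 * m)) := by nlinarith
  have h2 : √a * √a ≤ √a * (√3 * m) := by
    rw [Real.mul_self_sqrt ha]; exact le_of_mul_le_mul_left h1 ha0
  exact le_of_mul_le_mul_left h2 hsa

end MomentInequalities

section GaussianMoments

lemma iteratedDeriv_eval_mul_exp_mul_sq_div_two (c : ℝ) (k : ℕ) (P : ℝ[X]) :
    iteratedDeriv k (fun t => P.eval t * Real.exp (c * t ^ 2 / 2))
      = fun t => ((fun Q => derivative Q + C c * X * Q)^[k] P).eval t
          * Real.exp (c * t ^ 2 / 2) := by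
  induction k generalizing P with
  | zero => simp
  | succ k ih =>
    rw [iteratedDeriv_succ', Function.iterate_succ_apply, ← ih]
    congr 1
    ext t
    have he := (((hasDerivAt_pow 2 t).const_mul c).div_const 2).exp
    rw [((P.hasDerivAt t).fun_mul he).deriv]
    simp only [eval_add, eval_mul, eval_C, eval_X]
    push_cast
    ring

lemma integral_pow_gaussianReal_zero (v : ℝ≥0) (k : ℕ) :
    ∫ x, x ^ k ∂gaussianReal 0 v
      = ((fun Q => derivative Q + C (v : ℝ) * X * Q)^[k] 1).eval 0 := by
  have hmgf : mgf (fun x : ℝ => x) (gaussianReal 0 v)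
      = fun t => (1 : ℝ[X]).eval t * Real.exp (v * t ^ 2 / 2) := by
    simp [mgf_fun_id_gaussianReal]
  have h := iteratedDeriv_mgf_zero (X := fun x : ℝ => x) (μ := gaussianReal 0 v) (by simp) k
  rw [hmgf, iteratedDeriv_eval_mul_exp_mul_sq_div_two] at h
  simpa using h.symm

lemma integral_sq_gaussianReal_zero (v : ℝ≥0) : ∫ x, x ^ 2 ∂gaussianReal 0 v = v := by
  simp only [integral_pow_gaussianReal_zero, Function.iterate_succ_apply',
    Function.iterate_zero_apply, derivative_add, derivative_mul, derivative_C, derivative_X,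
    derivative_one, map_zero, eval_add, eval_mul, eval_C, eval_X, eval_one, eval_zero]
  ring

lemma integral_pow_four_gaussianReal_zero (v : ℝ≥0) :
    ∫ x, x ^ 4 ∂gaussianReal 0 v = 3 * (v : ℝ) ^ 2 := by
  simp only [integral_pow_gaussianReal_zero, Function.iterate_succ_apply',
    Function.iterate_zero_apply, derivative_add, derivative_mul, derivative_C, derivative_X,
    derivative_one, map_zero, eval_add, eval_mul, eval_C, eval_X, eval_one, eval_zero]
  ring

end GaussianMoments

section GaussianVector

variable {ι κ : Type*} [Fintype ι] [Fintype κ]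

lemma map_dotProduct_pi_gaussianReal (a : ι → ℝ) :
    (Measure.pi fun _ : ι => gaussianReal 0 1).map (a ⬝ᵥ ·)
      = gaussianReal 0 (∑ i, a i ^ 2).toNNReal := by
  set L := innerSL ℝ (WithLp.toLp 2 a : EuclideanSpace ℝ ι)
  have hL : (a ⬝ᵥ ·) = L ∘ WithLp.toLp 2 := by
    ext ξ
    simp [L, EuclideanSpace.inner_eq_star_dotProduct, dotProduct_comm]
  rw [hL, ← Measure.map_map (by fun_prop) (by fun_prop), map_pi_eq_stdGaussian,
    IsGaussian.eq_gaussianReal ((ProbabilityTheory.stdGaussian (EuclideanSpace ℝ ι)).map L)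
      inferInstance,
    integral_map (by fun_prop) (by fun_prop), variance_map (by fun_prop) (by fun_prop)]
  simp only [id_eq, Function.id_comp]
  rw [integral_strongDual_stdGaussian, variance_dual_stdGaussian, innerSL_apply_norm,
    EuclideanSpace.real_norm_sq_eq]

lemma memLp_dotProduct_pi_gaussianReal (a : ι → ℝ) (p : ℝ≥0) :
    MemLp (a ⬝ᵥ ·) p (Measure.pi fun _ : ι => gaussianReal 0 1) := by
  have h := memLp_id_gaussianReal (μ := 0) (v := (∑ i, a i ^ 2).toNNReal) p
  rwa [← map_dotProduct_pi_gaussianReal, memLp_map_measure_iff (by fun_prop) (by fun_prop)] at h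

lemma integral_dotProduct_pow_pi_gaussianReal (a : ι → ℝ) (k : ℕ) :
    ∫ ξ, (a ⬝ᵥ ξ) ^ k ∂(Measure.pi fun _ : ι => gaussianReal 0 1)
      = ∫ x, x ^ k ∂gaussianReal 0 (∑ i, a i ^ 2).toNNReal := by
  rw [← map_dotProduct_pi_gaussianReal, integral_map (by fun_prop) (by fun_prop)]

lemma memLp_mulVec_pi_gaussianReal (M : Matrix κ ι ℝ) (p : ℝ≥0) :
    MemLp (M *ᵥ ·) p (Measure.pi fun _ : ι => gaussianReal 0 1) :=
  MemLp.of_eval fun k => memLp_dotProduct_pi_gaussianReal (M k) p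

lemma memLp_toLp_mulVec_pi_gaussianReal (M : Matrix κ ι ℝ) (p : ℝ≥0) :
    MemLp (fun ξ => WithLp.toLp 2 (M *ᵥ ξ)) p (Measure.pi fun _ : ι => gaussianReal 0 1) :=
  memLp_piLp_iff.2 fun k => memLp_dotProduct_pi_gaussianReal (M k) p

end GaussianVector

section GaussianVectorNorm

variable {ι κ : Type*} [Fintype ι] [Fintype κ]

lemma integral_sum_sq_mulVec_pi_gaussianReal (U : Matrix κ ι ℝ) :
    ∫ ξ, ∑ k, (U *ᵥ ξ) k ^ 2 ∂(Measure.pi fun _ : ι => gaussianReal 0 1)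
      = ∑ k, ∑ j, U k j ^ 2 := by
  change ∫ ξ, ∑ k, (U k ⬝ᵥ ξ) ^ 2 ∂_ = _
  rw [integral_finsetSum _ fun k _ => (memLp_dotProduct_pi_gaussianReal (U k) 2).integrable_sq]
  refine Finset.sum_congr rfl fun k _ => ?_
  rw [integral_dotProduct_pow_pi_gaussianReal, integral_sq_gaussianReal_zero,
    Real.coe_toNNReal _ (by positivity)]

lemma integral_sq_sum_sq_mulVec_pi_gaussianReal_le (U : Matrix κ ι ℝ) :
    ∫ ξ, (∑ k, (U *ᵥ ξ) k ^ 2) ^ 2 ∂(Measure.pi fun _ : ι => gaussianReal 0 1)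
      ≤ 3 * (∑ k, ∑ j, U k j ^ 2) ^ 2 := by
  change ∫ ξ, (∑ k, (U k ⬝ᵥ ξ) ^ 2) ^ 2 ∂_ ≤ _
  have hL2 : ∀ k, MemLp (fun ξ => (U k ⬝ᵥ ξ) ^ 2) 2 (Measure.pi fun _ : ι => gaussianReal 0 1) :=
    fun k => (memLp_two_iff_integrable_sq (by fun_prop)).2 <| by
      simpa [← pow_mul, (by decide : Even 4).pow_abs] using
        (memLp_dotProduct_pi_gaussianReal (U k) 4).integrable_norm_pow (by norm_num)
  have h4 : ∀ k, ∫ ξ, ((U k ⬝ᵥ ξ) ^ 2) ^ 2 ∂(Measure.pi fun _ : ι => gaussianReal 0 1)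
      = 3 * (∑ j, U k j ^ 2) ^ 2 := fun k => by
    simp_rw [← pow_mul]
    rw [integral_dotProduct_pow_pi_gaussianReal, integral_pow_four_gaussianReal_zero,
      Real.coe_toNNReal _ (by positivity)]
  calc _ ≤ (∑ k, √(∫ ξ, ((U k ⬝ᵥ ξ) ^ 2) ^ 2 ∂(Measure.pi fun _ : ι => gaussianReal 0 1))) ^ 2 :=
        integral_sq_sum_le _ (fun k ξ => sq_nonneg _) hL2
    _ = 3 * (∑ k, ∑ j, U k j ^ 2) ^ 2 := by
      simp_rw [h4, Real.sqrt_mul (by norm_num : (0 : ℝ) ≤ 3),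
        Real.sqrt_sq (Finset.sum_nonneg fun j _ => sq_nonneg (U _ j)), ← Finset.mul_sum, mul_pow,
        Real.sq_sqrt (by norm_num : (0 : ℝ) ≤ 3)]

lemma sqrt_le_sqrt_three_mul_integral_norm_mulVec_pi_gaussianReal (U : Matrix κ ι ℝ) :
    √(∑ k, ∑ j, U k j ^ 2)
      ≤ √3 * ∫ ξ, ‖WithLp.toLp 2 (U *ᵥ ξ)‖ ∂(Measure.pi fun _ : ι => gaussianReal 0 1) := by
  have hsq : ∀ ξ : ι → ℝ, ‖WithLp.toLp 2 (U *ᵥ ξ)‖ ^ 2 = ∑ k, (U *ᵥ ξ) k ^ 2 := fun ξ =>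
    EuclideanSpace.real_norm_sq_eq _
  have hX : MemLp (fun ξ => ‖WithLp.toLp 2 (U *ᵥ ξ)‖) 4
      (Measure.pi fun _ : ι => gaussianReal 0 1) :=
    (memLp_toLp_mulVec_pi_gaussianReal U 4).norm
  have h := sqrt_integral_sq_le_of_integral_pow_four_le (fun ξ => norm_nonneg _) hX (by
    simp_rw [show (4 : ℕ) = 2 * 2 from rfl, pow_mul, hsq, integral_sum_sq_mulVec_pi_gaussianReal]
    exact integral_sq_sum_sq_mulVec_pi_gaussianReal_le U)
  simpa only [hsq, integral_sum_sq_mulVec_pi_gaussianReal] using h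

end GaussianVectorNorm

section SphericalDiscrepancy

variable {m n : ℕ}

lemma supNorm_eq_norm (v : Fin m → ℝ) : supNorm v = ‖v‖ := by
  have hnn : 0 ≤ supNorm v := Real.iSup_nonneg fun i => abs_nonneg (v i)
  refine le_antisymm (Real.iSup_le (fun i => norm_le_pi_norm v i) (norm_nonneg v)) ?_
  exact (pi_norm_le_iff_of_nonneg hnn).2 fun i =>
    le_ciSup (f := fun i => |v i|) (Finite.bddAbove_range _) i

lemma supNorm_nonneg (v : Fin m → ℝ) : 0 ≤ supNorm v :=
  (supNorm_eq_norm v).symm ▸ norm_nonneg v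

lemma e2_eq_norm (x : Fin n → ℝ) : e2 x = ‖WithLp.toLp 2 x‖ := by
  simp [e2, EuclideanSpace.norm_eq]

lemma discS_nonneg (A : Matrix (Fin m) (Fin n) ℝ) : 0 ≤ discS A :=
  Real.sInf_nonneg fun _ ⟨_, _, hd⟩ => hd ▸ supNorm_nonneg _

lemma discS_le (A : Matrix (Fin m) (Fin n) ℝ) {x : Fin n → ℝ}
    (hx : ‖WithLp.toLp 2 x‖ = √n) : discS A ≤ ‖A *ᵥ x‖ := by
  refine csInf_le ⟨0, fun _ ⟨_, _, hd⟩ => hd ▸ supNorm_nonneg _⟩ ?_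
  exact ⟨x, by rw [e2_eq_norm, hx], (supNorm_eq_norm _).symm⟩

lemma discS_mul_norm_le (A : Matrix (Fin m) (Fin n) ℝ) (x : Fin n → ℝ) :
    discS A * ‖WithLp.toLp 2 x‖ ≤ √n * ‖A *ᵥ x‖ := by
  obtain hx | hx := (norm_nonneg (WithLp.toLp 2 x)).eq_or_lt
  · rw [← hx, mul_zero]
    positivity
  have hc : 0 ≤ √n / ‖WithLp.toLp 2 x‖ := div_nonneg (Real.sqrt_nonneg _) hx.le
  have h := discS_le A (x := (√n / ‖WithLp.toLp 2 x‖) • x) (by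
    rw [WithLp.toLp_smul, norm_smul, Real.norm_of_nonneg hc, div_mul_cancel₀ _ hx.ne'])
  rwa [Matrix.mulVec_smul, norm_smul, Real.norm_of_nonneg hc, div_mul_eq_mul_div,
    le_div_iff₀ hx] at h

lemma discS_mul_integral_norm_mulVec_le {ι : Type*} [Fintype ι] (A : Matrix (Fin m) (Fin n) ℝ)
    (U : Matrix (Fin n) ι ℝ) :
    discS A * ∫ ξ, ‖WithLp.toLp 2 (U *ᵥ ξ)‖ ∂(Measure.pi fun _ : ι => gaussianReal 0 1)
      ≤ √n * ∫ ξ, ‖A *ᵥ (U *ᵥ ξ)‖ ∂(Measure.pi fun _ : ι => gaussianReal 0 1) := by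
  have hN := ((memLp_toLp_mulVec_pi_gaussianReal U 1).integrable le_rfl).norm
  have hY := ((memLp_mulVec_pi_gaussianReal (A * U) 1).integrable le_rfl).norm
  simp_rw [← Matrix.mulVec_mulVec, ← integral_const_mul] at hY ⊢
  exact integral_mono (hN.const_mul _) (hY.const_mul _) fun ξ => discS_mul_norm_le A (U *ᵥ ξ)

end SphericalDiscrepancy

theorem stmt_2 :
    ∃ C : ℝ, 0 < C ∧
      ∀ (m n : ℕ) (A : Matrix (Fin m) (Fin n) ℝ) (U : Matrix (Fin n) (Fin n) ℝ),
        (∑ i, ∑ j, U i j ^ 2) = (n : ℝ) →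
        discS A ≤ C * ∫ ξ, supNorm (A.mulVec (U.mulVec ξ)) ∂(stdGaussian n) := by
  refine ⟨√3, by positivity, fun m n A U hU => ?_⟩
  simp only [_root_.stdGaussian, supNorm_eq_norm]
  set γ := Measure.pi fun _ : Fin n => gaussianReal 0 1
  have hY : 0 ≤ ∫ ξ, ‖A *ᵥ (U *ᵥ ξ)‖ ∂γ := integral_nonneg fun _ => norm_nonneg _
  rcases n.eq_zero_or_pos with rfl | hn
  · calc discS A ≤ ‖A *ᵥ 0‖ := discS_le A (by simp)
      _ = 0 := by simp
      _ ≤ _ := mul_nonneg (Real.sqrt_nonneg 3) hY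
  have hN : √n ≤ √3 * ∫ ξ, ‖WithLp.toLp 2 (U *ᵥ ξ)‖ ∂γ :=
    hU ▸ sqrt_le_sqrt_three_mul_integral_norm_mulVec_pi_gaussianReal U
  refine le_of_mul_le_mul_left ?_ (Real.sqrt_pos.2 (Nat.cast_pos.2 hn))
  calc √n * discS A ≤ √3 * (∫ ξ, ‖WithLp.toLp 2 (U *ᵥ ξ)‖ ∂γ) * discS A :=
        mul_le_mul_of_nonneg_right hN (discS_nonneg A)
    _ = √3 * (discS A * ∫ ξ, ‖WithLp.toLp 2 (U *ᵥ ξ)‖ ∂γ) := by ring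
    _ ≤ √3 * (√n * ∫ ξ, ‖A *ᵥ (U *ᵥ ξ)‖ ∂γ) :=
        mul_le_mul_of_nonneg_left (discS_mul_integral_norm_mulVec_le A U) (Real.sqrt_nonneg 3)
    _ = √n * (√3 * ∫ ξ, ‖A *ᵥ (U *ᵥ ξ)‖ ∂γ) := by ring
end

section
/- There exists a universal constant C > 0 such that for every m ≥ 2, every n ≥ 1, and every matrix A ∈ ℝ^{m×n}, the spherical discrepancy satisfies disc_s(A) ≤ C · √(min(n, log m)) · disc_v(A). -/
open MeasureTheory

/-- Vector discrepancy. -/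
noncomputable def discV {m n : ℕ} (A : Matrix (Fin m) (Fin n) ℝ) : ℝ :=
  sInf { d | ∃ u : Fin n → (Fin n → ℝ), (∀ j, e2 (u j) = 1) ∧
    d = ⨆ i, e2 (fun k => ∑ j, A i j * u j k) }

/-!
Let `u_1, …, u_n` be unit vectors with `‖∑_j A_ij u_j‖ ≤ D` for every row `i`; we round them to
a point of the sphere of radius `√n` in two ways.

Since `∑_k ∑_j u_jk² = n`, some coordinate `k` has `∑_j u_jk² ≥ 1`, and the column `x_j = u_jk`,
scaled up by at most `√n` to the sphere, has `|(Ax)_i| ≤ √n D`.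

Alternatively project onto a uniformly random sign vector `σ`: `y_j = ⟪u_j, σ⟫`. Then
`(Ay)_i = ⟪v_i, σ⟫` with `v_i = ∑_j A_ij u_j`, `‖v_i‖ ≤ D`, so by Hoeffding `|(Ay)_i| > D √(2 log 25m)` has probability
at most `2/(25m)`. By Khintchine, `‖y‖²` has mean `n` and second moment at most `3n²`, so by
Paley–Zygmund `‖y‖² ≥ n/2` with probability at least `1/12 > 2/25`. Some `σ` does both, and
scaling that `y` up by at most `√2` gives `disc_s A ≤ 2D √(log 25m) ≤ 5D √(log m)`.
-/

open Finset Matrix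

/-- Sums over `ω : ρ → Bool` are `2 ^ card ρ` times expectations over a uniform random sign
vector. -/
noncomputable def signVec {ρ : Type*} (ω : ρ → Bool) : ρ → ℝ := fun k => if ω k then 1 else -1

section SignVectors

variable {ρ : Type*}

lemma signVec_sq (ω : ρ → Bool) (k : ρ) : signVec ω k ^ 2 = 1 := by
  unfold signVec; split_ifs <;> norm_num

lemma sum_mul_signVec_update_of_notMem [DecidableEq ρ] (S : Finset ρ) (c : ρ → ℝ) {j : ρ}
    (hj : j ∉ S) (ω : ρ → Bool) (b : Bool) :
    ∑ k ∈ S, c k * signVec (Function.update ω j b) k = ∑ k ∈ S, c k * signVec ω k :=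
  sum_congr rfl fun k hk => by
    simp only [signVec, Function.update_of_ne (ne_of_mem_of_not_mem hk hj)]

variable [Fintype ρ] [DecidableEq ρ]

lemma card_fun_bool_eq_two_pow : (Fintype.card (ρ → Bool) : ℝ) = 2 ^ Fintype.card ρ := by simp

lemma sum_mul_signVec_eq_zero (G : (ρ → Bool) → ℝ) (j : ρ)
    (hG : ∀ ω b, G (Function.update ω j b) = G ω) : ∑ ω, G ω * signVec ω j = 0 := by
  have hflip : Function.Involutive fun ω : ρ → Bool => Function.update ω j (!ω j) :=
    fun ω => by simp
  have h : ∑ ω, G ω * signVec ω j = ∑ ω, -(G ω * signVec ω j) :=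
    Fintype.sum_bijective _ hflip.bijective _ _ fun ω => by
      simp only [hG, signVec, Function.update_self]
      cases ω j <;> simp
  rw [sum_neg_distrib] at h
  linarith

lemma sum_sq_sum_mul_signVec (S : Finset ρ) (c : ρ → ℝ) :
    ∑ ω, (∑ k ∈ S, c k * signVec ω k) ^ 2 = 2 ^ Fintype.card ρ * ∑ k ∈ S, c k ^ 2 := by
  induction S using Finset.induction_on with
  | empty => simp
  | @insert j S hj ih =>
    set X := fun ω => ∑ k ∈ S, c k * signVec ω k
    have hexpand : ∀ ω, (∑ k ∈ insert j S, c k * signVec ω k) ^ 2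
        = c j ^ 2 + X ω ^ 2 + 2 * c j * X ω * signVec ω j := fun ω => by
      rw [sum_insert hj]
      linear_combination c j ^ 2 * signVec_sq ω j
    have hodd := sum_mul_signVec_eq_zero (fun ω => 2 * c j * X ω) j
      fun ω b => by simp only [X, sum_mul_signVec_update_of_notMem S c hj]
    rw [Fintype.sum_congr _ _ hexpand]
    simp only [sum_add_distrib, hodd, X, ih, sum_const, card_univ, nsmul_eq_mul,
      card_fun_bool_eq_two_pow, sum_insert hj]
    ring

lemma sum_pow_four_sum_mul_signVec_le (S : Finset ρ) (c : ρ → ℝ) :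
    ∑ ω, (∑ k ∈ S, c k * signVec ω k) ^ 4 ≤ 3 * 2 ^ Fintype.card ρ * (∑ k ∈ S, c k ^ 2) ^ 2 := by
  induction S using Finset.induction_on with
  | empty => simp
  | @insert j S hj ih =>
    set X := fun ω => ∑ k ∈ S, c k * signVec ω k
    have hexpand : ∀ ω, (∑ k ∈ insert j S, c k * signVec ω k) ^ 4
        = c j ^ 4 + 6 * c j ^ 2 * X ω ^ 2 + X ω ^ 4
          + (4 * c j ^ 3 * X ω + 4 * c j * X ω ^ 3) * signVec ω j := fun ω => by
      rw [sum_insert hj]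
      linear_combination (c j ^ 4 * (signVec ω j ^ 2 + 1) + 6 * c j ^ 2 * X ω ^ 2
        + 4 * c j ^ 3 * X ω * signVec ω j) * signVec_sq ω j
    have hodd := sum_mul_signVec_eq_zero (fun ω => 4 * c j ^ 3 * X ω + 4 * c j * X ω ^ 3) j
      fun ω b => by simp only [X, sum_mul_signVec_update_of_notMem S c hj]
    rw [Fintype.sum_congr _ _ hexpand]
    simp only [sum_add_distrib, hodd, ← mul_sum, sum_const, card_univ, nsmul_eq_mul,
      card_fun_bool_eq_two_pow, sum_insert hj, X, sum_sq_sum_mul_signVec]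
    have hs : 0 ≤ ∑ k ∈ S, c k ^ 2 := sum_nonneg fun k _ => sq_nonneg _
    nlinarith [pow_pos (two_pos (α := ℝ)) (Fintype.card ρ), pow_nonneg (sq_nonneg (c j)) 2,
      mul_nonneg (sq_nonneg (c j)) hs]

lemma sum_exp_dotProduct_signVec_le (c : ρ → ℝ) :
    ∑ ω, Real.exp (c ⬝ᵥ signVec ω) ≤ 2 ^ Fintype.card ρ * Real.exp ((∑ k, c k ^ 2) / 2) :=
  calc ∑ ω, Real.exp (c ⬝ᵥ signVec ω)
      = ∑ ω : ρ → Bool, ∏ k, Real.exp (c k * if ω k then 1 else -1) := by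
        simp only [dotProduct, signVec, Real.exp_sum]
    _ = ∏ k, ∑ b : Bool, Real.exp (c k * if b then 1 else -1) :=
        (Fintype.prod_sum fun k (b : Bool) => Real.exp (c k * if b then 1 else -1)).symm
    _ = ∏ k, 2 * Real.cosh (c k) := prod_congr rfl fun k _ => by simp [Real.cosh_eq]; ring
    _ ≤ ∏ k, 2 * Real.exp (c k ^ 2 / 2) :=
        prod_le_prod (fun k _ => by positivity) fun k _ => by
          gcongr; exact Real.cosh_le_exp_half_sq _
    _ = 2 ^ Fintype.card ρ * Real.exp ((∑ k, c k ^ 2) / 2) := by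
        rw [prod_mul_distrib, prod_const, card_univ, ← Real.exp_sum, sum_div]

lemma card_lt_abs_dotProduct_signVec_mul_exp_le (c : ρ → ℝ) (t : ℝ) {lam : ℝ} (hlam : 0 ≤ lam) :
    (#{ω | t < |c ⬝ᵥ signVec ω|} : ℝ) * Real.exp (lam * t)
      ≤ 2 * 2 ^ Fintype.card ρ * Real.exp (lam ^ 2 * (∑ k, c k ^ 2) / 2) := by
  have hmgf : ∀ a, a ^ 2 = lam ^ 2 → ∑ ω, Real.exp ((a • c) ⬝ᵥ signVec ω)
      ≤ 2 ^ Fintype.card ρ * Real.exp (lam ^ 2 * (∑ k, c k ^ 2) / 2) := fun a ha => by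
    refine (sum_exp_dotProduct_signVec_le _).trans_eq ?_
    simp only [Pi.smul_apply, smul_eq_mul, mul_pow, ← mul_sum, ha]
  have hmarkov : ∀ ω ∈ ({ω | t < |c ⬝ᵥ signVec ω|} : Finset _), Real.exp (lam * t)
      ≤ Real.exp ((lam • c) ⬝ᵥ signVec ω) + Real.exp ((-lam • c) ⬝ᵥ signVec ω) := fun ω hω =>
    calc Real.exp (lam * t) ≤ Real.exp |lam * (c ⬝ᵥ signVec ω)| := by
          rw [abs_mul, abs_of_nonneg hlam]; gcongr; exact (mem_filter.1 hω).2.le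
      _ ≤ _ := (Real.exp_abs_le _).trans_eq (by simp [smul_dotProduct])
  calc _ = ∑ ω ∈ {ω | t < |c ⬝ᵥ signVec ω|}, Real.exp (lam * t) := by
        rw [sum_const, nsmul_eq_mul]
    _ ≤ ∑ ω, (Real.exp ((lam • c) ⬝ᵥ signVec ω) + Real.exp ((-lam • c) ⬝ᵥ signVec ω)) :=
        (sum_le_sum hmarkov).trans <|
          sum_le_sum_of_subset_of_nonneg (subset_univ _) fun _ _ _ => by positivity
    _ ≤ _ := by
        rw [sum_add_distrib, two_mul, add_mul]
        exact add_le_add (hmgf lam rfl) (hmgf (-lam) (neg_sq lam))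

lemma card_lt_abs_dotProduct_signVec_le (c : ρ → ℝ) {D L : ℝ} (hD : 0 < D) (hL : 0 ≤ L)
    (hc : ∑ k, c k ^ 2 ≤ D ^ 2) :
    (#{ω | D * √(2 * L) < |c ⬝ᵥ signVec ω|} : ℝ) ≤ 2 * 2 ^ Fintype.card ρ * Real.exp (-L) := by
  set lam := √(2 * L) / D
  have hlamt : lam * (D * √(2 * L)) = L + L := by
    rw [← mul_assoc, div_mul_cancel₀ _ hD.ne', Real.mul_self_sqrt (by positivity), two_mul]
  have hlamD : lam ^ 2 * D ^ 2 = 2 * L := by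
    rw [div_pow, Real.sq_sqrt (by positivity)]; field_simp
  have h := card_lt_abs_dotProduct_signVec_mul_exp_le c (D * √(2 * L)) (by positivity : 0 ≤ lam)
  rw [hlamt, Real.exp_add, ← mul_assoc] at h
  have hexp : Real.exp (lam ^ 2 * (∑ k, c k ^ 2) / 2) ≤ Real.exp L := by
    gcongr
    linarith [mul_le_mul_of_nonneg_left hc (sq_nonneg lam)]
  rw [Real.exp_neg, ← div_eq_mul_inv, le_div_iff₀ (Real.exp_pos L)]
  refine le_of_mul_le_mul_right (h.trans ?_) (Real.exp_pos L)
  gcongr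

end SignVectors

lemma sq_sub_le_card_mul_sum_sq {Ω : Type*} [Fintype Ω] (Z : Ω → ℝ) {a : ℝ} (ha : 0 ≤ a)
    (hZ : Fintype.card Ω * a ≤ ∑ ω, Z ω) :
    (∑ ω, Z ω - Fintype.card Ω * a) ^ 2 ≤ #{ω | a ≤ Z ω} * ∑ ω, Z ω ^ 2 := by
  have hlow : ∑ ω ∈ {ω | ¬a ≤ Z ω}, Z ω ≤ Fintype.card Ω * a :=
    calc _ ≤ ∑ ω ∈ {ω | ¬a ≤ Z ω}, a :=
          sum_le_sum fun ω hω => (not_le.1 (mem_filter.1 hω).2).le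
      _ ≤ Fintype.card Ω * a := by
          rw [sum_const, nsmul_eq_mul]; gcongr; exact_mod_cast card_le_univ _
  have hhigh : ∑ ω, Z ω - Fintype.card Ω * a ≤ ∑ ω ∈ {ω | a ≤ Z ω}, Z ω := by
    rw [← sum_filter_add_sum_filter_not univ (fun ω => a ≤ Z ω)]; linarith
  calc (∑ ω, Z ω - Fintype.card Ω * a) ^ 2 ≤ (∑ ω ∈ {ω | a ≤ Z ω}, Z ω) ^ 2 :=
        pow_le_pow_left₀ (sub_nonneg.2 hZ) hhigh 2
    _ ≤ #{ω | a ≤ Z ω} * ∑ ω ∈ {ω | a ≤ Z ω}, Z ω ^ 2 := by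
        simpa using sum_mul_sq_le_sq_mul_sq {ω | a ≤ Z ω} (fun _ => 1) Z
    _ ≤ #{ω | a ≤ Z ω} * ∑ ω, Z ω ^ 2 :=
        mul_le_mul_of_nonneg_left
          (sum_le_sum_of_subset_of_nonneg (subset_univ _) fun ω _ _ => sq_nonneg (Z ω))
          (Nat.cast_nonneg _)

lemma exists_mem_forall_notMem_of_sum_card_lt {Ω κ : Type*} [DecidableEq Ω] [Fintype κ]
    (T : Finset Ω) (B : κ → Finset Ω) (h : ∑ i, #(B i) < #T) : ∃ ω ∈ T, ∀ i, ω ∉ B i := by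
  by_contra! hcover
  have hsub : T ⊆ univ.biUnion B := fun ω hω => by
    obtain ⟨i, hi⟩ := hcover ω hω
    exact mem_biUnion.2 ⟨i, mem_univ _, hi⟩
  exact ((card_le_card hsub).trans (card_biUnion_le (s := univ) (t := B))).not_gt h

section Rounding

variable {ι ρ : Type*} [Fintype ι] [Fintype ρ] [DecidableEq ρ]

lemma sum_sum_mulVec_signVec_sq (u : Matrix ι ρ ℝ) :
    ∑ ω, ∑ j, (u *ᵥ signVec ω) j ^ 2 = 2 ^ Fintype.card ρ * ∑ j, ∑ k, u j k ^ 2 := by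
  rw [sum_comm, mul_sum]
  exact sum_congr rfl fun j _ => sum_sq_sum_mul_signVec univ (u j)

lemma sum_sq_sum_mulVec_signVec_sq_le (u : Matrix ι ρ ℝ) :
    ∑ ω, (∑ j, (u *ᵥ signVec ω) j ^ 2) ^ 2
      ≤ 3 * 2 ^ Fintype.card ρ * (∑ j, ∑ k, u j k ^ 2) ^ 2 := by
  set s := fun j => ∑ k, u j k ^ 2
  have h4 : ∀ j, ∑ ω, ((u *ᵥ signVec ω) j ^ 2) ^ 2 ≤ 3 * 2 ^ Fintype.card ρ * s j ^ 2 :=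
    fun j => by simp only [← pow_mul]; exact sum_pow_four_sum_mul_signVec_le univ (u j)
  have hpair : ∀ j l, ∑ ω, (u *ᵥ signVec ω) j ^ 2 * (u *ᵥ signVec ω) l ^ 2
      ≤ 3 * 2 ^ Fintype.card ρ * (s j * s l) := fun j l => by
    refine le_of_abs_le (abs_le_of_sq_le_sq ?_ (by positivity))
    calc _ ≤ (∑ ω, ((u *ᵥ signVec ω) j ^ 2) ^ 2) * ∑ ω, ((u *ᵥ signVec ω) l ^ 2) ^ 2 :=
          sum_mul_sq_le_sq_mul_sq _ _ _
      _ ≤ (3 * 2 ^ Fintype.card ρ * s j ^ 2) * (3 * 2 ^ Fintype.card ρ * s l ^ 2) :=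
          mul_le_mul (h4 j) (h4 l) (by positivity) (by positivity)
      _ = _ := by ring
  calc ∑ ω, (∑ j, (u *ᵥ signVec ω) j ^ 2) ^ 2
      = ∑ j, ∑ l, ∑ ω, (u *ᵥ signVec ω) j ^ 2 * (u *ᵥ signVec ω) l ^ 2 := by
        simp only [sq (∑ _, _), sum_mul_sum]
        rw [sum_comm]
        exact sum_congr rfl fun j _ => sum_comm
    _ ≤ ∑ j, ∑ l, 3 * 2 ^ Fintype.card ρ * (s j * s l) :=
        sum_le_sum fun j _ => sum_le_sum fun l _ => hpair j l
    _ = 3 * 2 ^ Fintype.card ρ * (∑ j, s j) ^ 2 := by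
        rw [sq, sum_mul_sum, mul_sum]; simp only [mul_sum]

lemma two_pow_div_twelve_le_card_half_le_sum_sq_mulVec_signVec [Nonempty ι] (u : Matrix ι ρ ℝ)
    (hu : ∀ j, ∑ k, u j k ^ 2 = 1) :
    (2 ^ Fintype.card ρ : ℝ) / 12
      ≤ #{ω | (Fintype.card ι : ℝ) / 2 ≤ ∑ j, (u *ᵥ signVec ω) j ^ 2} := by
  have hn : (0 : ℝ) < Fintype.card ι := by simp [Fintype.card_pos]
  have hsum := sum_sum_mulVec_signVec_sq u
  have hsq := sum_sq_sum_mulVec_signVec_sq_le u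
  simp only [hu, sum_const, card_univ, nsmul_eq_mul, mul_one] at hsum hsq
  have hpz := sq_sub_le_card_mul_sum_sq (fun ω => ∑ j, (u *ᵥ signVec ω) j ^ 2)
    (a := Fintype.card ι / 2) (by positivity)
    (by rw [card_fun_bool_eq_two_pow, hsum]; gcongr; exact half_le_self hn.le)
  rw [card_fun_bool_eq_two_pow, hsum] at hpz
  refine le_of_mul_le_mul_right ?_
    (by positivity : (0 : ℝ) < 3 * 2 ^ Fintype.card ρ * Fintype.card ι ^ 2)
  calc (2 ^ Fintype.card ρ : ℝ) / 12 * (3 * 2 ^ Fintype.card ρ * Fintype.card ι ^ 2)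
      = (2 ^ Fintype.card ρ * Fintype.card ι - 2 ^ Fintype.card ρ * (Fintype.card ι / 2)) ^ 2 := by
        ring
    _ ≤ _ := hpz
    _ ≤ _ := by gcongr

lemma exists_sum_sq_ge_forall_abs_mulVec_le [Nonempty ι] {κ : Type*} [Fintype κ] [Nonempty κ]
    (A : Matrix κ ι ℝ) (u : Matrix ι ρ ℝ) (hu : ∀ j, ∑ k, u j k ^ 2 = 1) {D : ℝ} (hD : 0 < D)
    (hAu : ∀ i, ∑ k, (A * u) i k ^ 2 ≤ D ^ 2) :
    ∃ y : ι → ℝ, (Fintype.card ι : ℝ) / 2 ≤ ∑ j, y j ^ 2 ∧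
      ∀ i, |(A *ᵥ y) i| ≤ D * √(2 * Real.log (25 * Fintype.card κ)) := by
  set L := Real.log (25 * Fintype.card κ)
  have hm : (1 : ℝ) ≤ Fintype.card κ := by exact_mod_cast Fintype.card_pos
  have hL : 0 ≤ L := Real.log_nonneg (by linarith)
  have hbad : ∀ i, (#{ω | D * √(2 * L) < |(A * u) i ⬝ᵥ signVec ω|} : ℝ)
      ≤ 2 * 2 ^ Fintype.card ρ / (25 * Fintype.card κ) := fun i => by
    have := card_lt_abs_dotProduct_signVec_le ((A * u) i) hD hL (hAu i)
    rwa [Real.exp_neg, Real.exp_log (by positivity), ← div_eq_mul_inv] at this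
  have hunion : (∑ i, #{ω | D * √(2 * L) < |(A * u) i ⬝ᵥ signVec ω|} : ℝ)
      < #{ω | (Fintype.card ι : ℝ) / 2 ≤ ∑ j, (u *ᵥ signVec ω) j ^ 2} :=
    calc _ ≤ ∑ i : κ, (2 : ℝ) * 2 ^ Fintype.card ρ / (25 * Fintype.card κ) :=
          sum_le_sum fun i _ => hbad i
      _ = 2 * 2 ^ Fintype.card ρ / 25 := by
          rw [sum_const, card_univ, nsmul_eq_mul]; field_simp
      _ < (2 : ℝ) ^ Fintype.card ρ / 12 := by linarith [pow_pos (two_pos (α := ℝ)) (Fintype.card ρ)]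
      _ ≤ _ := two_pow_div_twelve_le_card_half_le_sum_sq_mulVec_signVec u hu
  obtain ⟨ω, hgood, hsmall⟩ :=
    exists_mem_forall_notMem_of_sum_card_lt _ _ (by exact_mod_cast hunion)
  refine ⟨u *ᵥ signVec ω, (mem_filter.1 hgood).2, fun i => ?_⟩
  rw [mulVec_mulVec]
  exact not_lt.1 fun h => hsmall i (mem_filter.2 ⟨mem_univ _, h⟩)

end Rounding

section Discrepancy

variable {m n : ℕ} (A : Matrix (Fin m) (Fin n) ℝ)

lemma discS_le_supNorm_mulVec (x : Fin n → ℝ) (hx : ∑ j, x j ^ 2 = n) :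
    discS A ≤ supNorm (A *ᵥ x) :=
  csInf_le ⟨0, by rintro _ ⟨y, -, rfl⟩; exact Real.iSup_nonneg fun i => abs_nonneg _⟩
    ⟨x, by rw [e2, hx], rfl⟩

lemma discS_le_of_abs_mulVec_le (y : Fin n → ℝ) {c b : ℝ} (hc : 0 ≤ c) (hb : 0 ≤ b)
    (hy : 0 < ∑ j, y j ^ 2) (hcy : n ≤ c ^ 2 * ∑ j, y j ^ 2) (hAy : ∀ i, |(A *ᵥ y) i| ≤ b) :
    discS A ≤ c * b := by
  set r := √(n / ∑ j, y j ^ 2)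
  have hr : r ≤ c := (Real.sqrt_le_left hc).2 (by rwa [div_le_iff₀ hy])
  refine (discS_le_supNorm_mulVec A (r • y) ?_).trans (Real.iSup_le (fun i => ?_) (by positivity))
  · simp only [Pi.smul_apply, smul_eq_mul, mul_pow, ← mul_sum, r,
      Real.sq_sqrt (div_nonneg (Nat.cast_nonneg n) hy.le)]
    field_simp
  · rw [mulVec_smul, Pi.smul_apply, smul_eq_mul, abs_mul, abs_of_nonneg (Real.sqrt_nonneg _)]
    exact mul_le_mul hr (hAy i) (abs_nonneg _) hc

lemma discS_le_mul_discV {K : ℝ} (hK : 0 < K)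
    (h : ∀ u : Matrix (Fin n) (Fin n) ℝ, (∀ j, ∑ k, u j k ^ 2 = 1) → ∀ D, 0 < D →
      (∀ i, ∑ k, (A * u) i k ^ 2 ≤ D ^ 2) → discS A ≤ K * D) :
    discS A ≤ K * discV A := by
  rw [← div_le_iff₀' hK]
  refine le_csInf ⟨_, (1 : Matrix (Fin n) (Fin n) ℝ), fun j => ?_, rfl⟩ ?_
  · simp [e2, one_apply]
  · rintro _ ⟨u, hu, rfl⟩
    refine le_of_forall_gt_imp_ge_of_dense fun D hD => ?_
    have hD0 : 0 < D := (Real.iSup_nonneg fun i => Real.sqrt_nonneg _).trans_lt hD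
    rw [div_le_iff₀' hK]
    refine h (of u) (fun j => Real.sqrt_eq_one.1 (hu j)) D hD0 fun i => ?_
    simp only [mul_apply, of_apply]
    exact (Real.sqrt_le_left hD0.le).1 ((le_ciSup (Finite.bddAbove_range _) i).trans hD.le)

lemma exists_one_le_sum_sq_col {ι : Type*} [Fintype ι] [Nonempty ι] (u : Matrix ι ι ℝ)
    (hu : ∀ j, ∑ k, u j k ^ 2 = 1) : ∃ k, 1 ≤ ∑ j, u j k ^ 2 := by
  have htotal : ∑ _k : ι, (1 : ℝ) ≤ ∑ k, ∑ j, u j k ^ 2 := by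
    rw [sum_comm]; simp [hu]
  obtain ⟨k, -, hk⟩ := exists_le_of_sum_le univ_nonempty htotal
  exact ⟨k, hk⟩

lemma discS_le_sqrt_mul [NeZero n] (u : Matrix (Fin n) (Fin n) ℝ) (hu : ∀ j, ∑ k, u j k ^ 2 = 1)
    {D : ℝ} (hD : 0 ≤ D) (hAu : ∀ i, ∑ k, (A * u) i k ^ 2 ≤ D ^ 2) :
    discS A ≤ √n * D := by
  obtain ⟨k, hk⟩ := exists_one_le_sum_sq_col u hu
  refine discS_le_of_abs_mulVec_le A (fun j => u j k) (Real.sqrt_nonneg _) hD (by linarith)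
    (by rw [Real.sq_sqrt (Nat.cast_nonneg n)]; exact le_mul_of_one_le_right (Nat.cast_nonneg n) hk)
    fun i => ?_
  change |(A * u) i k| ≤ D
  exact abs_le_of_sq_le_sq ((single_le_sum (fun k _ => sq_nonneg ((A * u) i k)) (mem_univ k)).trans
    (hAu i)) hD

lemma discS_le_two_mul_sqrt_log [NeZero m] [NeZero n] (u : Matrix (Fin n) (Fin n) ℝ)
    (hu : ∀ j, ∑ k, u j k ^ 2 = 1) {D : ℝ} (hD : 0 < D)
    (hAu : ∀ i, ∑ k, (A * u) i k ^ 2 ≤ D ^ 2) :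
    discS A ≤ 2 * D * √(Real.log (25 * m)) := by
  obtain ⟨y, hy, hAy⟩ := exists_sum_sq_ge_forall_abs_mulVec_le A u hu hD hAu
  simp only [Fintype.card_fin] at hy hAy
  have hn : (0 : ℝ) < n := by exact_mod_cast Nat.pos_of_ne_zero (NeZero.ne n)
  have hsqrt2 := Real.mul_self_sqrt (zero_le_two (α := ℝ))
  calc discS A ≤ √2 * (D * √(2 * Real.log (25 * m))) :=
        discS_le_of_abs_mulVec_le A y (Real.sqrt_nonneg _) (by positivity) (by linarith)
          (by rw [Real.sq_sqrt zero_le_two]; linarith) hAy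
    _ = 2 * D * √(Real.log (25 * m)) := by
        rw [Real.sqrt_mul zero_le_two]; linear_combination D * √(Real.log (25 * m)) * hsqrt2

end Discrepancy

lemma log_twentyfive_mul_le {x : ℝ} (hx : 2 ≤ x) :
    Real.log (25 * x) ≤ (5 / 2) ^ 2 * Real.log x := by
  have h25 : Real.log ((25 : ℕ) ^ 4) ≤ Real.log ((2 : ℕ) ^ 21) :=
    Real.log_le_log (by norm_num) (by norm_num)
  rw [Real.log_pow, Real.log_pow] at h25
  push_cast at h25
  have h2x : Real.log 2 ≤ Real.log x := Real.log_le_log two_pos hx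
  rw [Real.log_mul (by norm_num) (by linarith)]
  linarith

theorem stmt_7 :
    ∃ C : ℝ, 0 < C ∧
      ∀ (m n : ℕ), 2 ≤ m → 1 ≤ n →
        ∀ A : Matrix (Fin m) (Fin n) ℝ,
          discS A ≤ C * Real.sqrt (min (n : ℝ) (Real.log m)) * discV A := by
  refine ⟨5, by norm_num, fun m n hm hn A => ?_⟩
  have : NeZero m := ⟨by omega⟩
  have : NeZero n := ⟨by omega⟩
  have hlog : 0 < Real.log m := Real.log_pos (by exact_mod_cast hm)
  have hmin : 0 < min (n : ℝ) (Real.log m) := lt_min (by exact_mod_cast hn) hlog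
  refine discS_le_mul_discV A (by positivity) fun u hu D hD hAu => ?_
  rcases le_total (Real.log m) n with hmn | hnm
  · rw [min_eq_right hmn]
    calc discS A ≤ 2 * D * √(Real.log (25 * m)) := discS_le_two_mul_sqrt_log A u hu hD hAu
      _ ≤ 2 * D * (5 / 2 * √(Real.log m)) := by
          gcongr
          rw [← Real.sqrt_sq (by norm_num : (0 : ℝ) ≤ 5 / 2), ← Real.sqrt_mul (by positivity)]
          exact Real.sqrt_le_sqrt (log_twentyfive_mul_le (by exact_mod_cast hm))
      _ = 5 * √(Real.log m) * D := by ring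
  · rw [min_eq_left hnm]
    calc discS A ≤ √n * D := discS_le_sqrt_mul A u hu hD.le hAu
      _ ≤ 5 * √n * D := by gcongr; linarith [Real.sqrt_nonneg (n : ℝ)]
end

section
/- Let n = 3k for a positive integer k, and let a ∈ ℝⁿ. Define ℓ_1 = ∑_{i=1}^{k} |a_i|, ℓ_2 = ∑_{i=k+1}^{2k} |a_i|, ℓ_3 = ∑_{i=2k+1}^{3k} |a_i|. If 2·max(ℓ_1, ℓ_2, ℓ_3) ≤ ℓ_1 + ℓ_2 + ℓ_3 (i.e., ℓ_1, ℓ_2, ℓ_3 form the side lengths of a triangle in the plane), then there exist unit vectors w_1, …, w_n ∈ ℝ² such that ∑_{j=1}^n a_j w_j = 0. In particular, the rank-2 constrained vector discrepancy of the 1×n matrix with row a is zero, and hence its Gaussian discrepancy is zero. -/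
open MeasureTheory ProbabilityTheory

/-- Rank-r constrained vector discrepancy. -/
noncomputable def discVr {m n : ℕ} (r : ℕ) (A : Matrix (Fin m) (Fin n) ℝ) : ℝ :=
  sInf { d | ∃ u : Fin n → (Fin r → ℝ), (∀ j, e2 (u j) = 1) ∧
    d = ⨆ i, e2 (fun k => ∑ j, A i j * u j k) }

/-- Gaussian discrepancy. -/
noncomputable def discG {m n : ℕ} (A : Matrix (Fin m) (Fin n) ℝ) : ℝ :=
  sInf { d | ∃ U : Matrix (Fin n) (Fin n) ℝ, (∀ j, e2 (U j) = 1) ∧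
    d = ∫ ξ, supNorm (A.mulVec (U.mulVec ξ)) ∂(stdGaussian n) }

/-
The three block sums are the side lengths of a triangle, so there are unit vectors
z₁, z₂, z₃ ∈ ℂ ≅ ℝ² with l₁ z₁ + l₂ z₂ + l₃ z₃ = 0: take z₁ = 1, choose z₂ = e^{it} by the
intermediate value theorem so that ‖l₁ + l₂ z₂‖ = l₃ (as t runs over [0, π] this norm runs from
l₁ + l₂ down to |l₁ - l₂|), and let z₃ be the direction of -(l₁ + l₂ z₂). Giving coordinate j
of block b the vector ± z_b, with the sign of a_j, yields ∑ a_j w_j = ∑_b l_b z_b = 0. Both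
discrepancies are infima of nonnegative quantities, and this choice of vectors (padded with
zeros to rows of an n × n matrix for disc_G) attains the value 0.
-/

open Complex Real

lemma exists_norm_eq_one_norm_add_smul_eq {l₁ l₂ l₃ : ℝ} (hlow : |l₁ - l₂| ≤ l₃)
    (hhigh : l₃ ≤ l₁ + l₂) : ∃ z : ℂ, ‖z‖ = 1 ∧ ‖(l₁ : ℂ) + l₂ • z‖ = l₃ := by
  have hcont : ContinuousOn (fun t : ℝ => ‖(l₁ : ℂ) + l₂ • exp (t * I)‖) (Set.Icc 0 π) := by
    fun_prop
  have hmem : l₃ ∈ Set.Icc ‖(l₁ : ℂ) + l₂ • exp (π * I)‖ ‖(l₁ : ℂ) + l₂ • exp ((0 : ℝ) * I)‖ := by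
    simp only [exp_pi_mul_I, ofReal_zero, zero_mul, Complex.exp_zero, real_smul, mul_neg, mul_one]
    constructor
    · simpa [← sub_eq_add_neg, ← ofReal_sub] using hlow
    · simpa [← ofReal_add] using hhigh.trans (le_abs_self _)
  obtain ⟨t, -, ht⟩ := intermediate_value_Icc' Real.pi_pos.le hcont hmem
  exact ⟨exp (t * I), norm_exp_ofReal_mul_I t, ht⟩

lemma exists_norm_eq_one_sum_eq_zero {l₁ l₂ l₃ : ℝ} (hlow : |l₁ - l₂| ≤ l₃)
    (hhigh : l₃ ≤ l₁ + l₂) :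
    ∃ z₁ z₂ z₃ : ℂ, ‖z₁‖ = 1 ∧ ‖z₂‖ = 1 ∧ ‖z₃‖ = 1 ∧ l₁ • z₁ + l₂ • z₂ + l₃ • z₃ = 0 := by
  obtain ⟨z, hz, hnorm⟩ := exists_norm_eq_one_norm_add_smul_eq hlow hhigh
  set w := -((l₁ : ℂ) + l₂ • z)
  refine ⟨1, z, exp (arg w * I), norm_one, hz, norm_exp_ofReal_mul_I _, ?_⟩
  have hw : ‖w‖ = l₃ := by rw [norm_neg, hnorm]
  simp only [← hw, real_smul, norm_mul_exp_arg_mul_I, w]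
  ring

lemma exists_norm_eq_one_sum_smul_eq_zero {ι : Type*} [Fintype ι] (a : ι → ℝ) {v : ι → ℂ}
    (hv : ∀ j, ‖v j‖ = 1) (h : ∑ j, |a j| • v j = 0) :
    ∃ w : ι → ℂ, (∀ j, ‖w j‖ = 1) ∧ ∑ j, a j • w j = 0 := by
  have hsign (j : ι) : ∃ w : ℂ, ‖w‖ = 1 ∧ a j • w = |a j| • v j := by
    rcases abs_choice (a j) with habs | habs
    · exact ⟨v j, hv j, by rw [habs]⟩
    · exact ⟨-v j, by rw [norm_neg, hv j], by rw [habs, smul_neg, neg_smul]⟩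
  choose w hw hwv using hsign
  exact ⟨w, hw, by simpa only [hwv] using h⟩

lemma sum_abs_smul_ite {M : Type*} [AddCommGroup M] [Module ℝ M] {n : ℕ} (k : ℕ)
    (a : Fin n → ℝ) (z₁ z₂ z₃ : M) :
    ∑ j : Fin n, |a j| • (if (j : ℕ) < k then z₁ else if (j : ℕ) < 2 * k then z₂ else z₃) =
      (∑ i : Fin n, if (i : ℕ) < k then |a i| else 0) • z₁ +
      (∑ i : Fin n, if k ≤ (i : ℕ) ∧ (i : ℕ) < 2 * k then |a i| else 0) • z₂ +
      (∑ i : Fin n, if 2 * k ≤ (i : ℕ) then |a i| else 0) • z₃ := by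
  simp only [Finset.sum_smul, ← Finset.sum_add_distrib]
  refine Finset.sum_congr rfl fun j _ => ?_
  split_ifs <;> first | omega | simp

lemma exists_e2_eq_one_sum_mul_eq_zero_of_complex {n : ℕ} (a : Fin n → ℝ) (w : Fin n → ℂ)
    (hw : ∀ j, ‖w j‖ = 1) (h : ∑ j, a j • w j = 0) :
    ∃ u : Fin n → Fin 2 → ℝ, (∀ j, e2 (u j) = 1) ∧ ∀ c, ∑ j, a j * u j c = 0 := by
  refine ⟨fun j => ![(w j).re, (w j).im], fun j => ?_, fun c => ?_⟩
  · simp [e2, ← norm_eq_sqrt_sq_add_sq, hw]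
  · fin_cases c
    · simpa using congrArg re h
    · simpa using congrArg im h

lemma discVr_eq_zero_of_sum_mul_eq_zero {m n r : ℕ} (A : Matrix (Fin m) (Fin n) ℝ)
    (u : Fin n → Fin r → ℝ) (hu : ∀ j, e2 (u j) = 1) (h : ∀ i c, ∑ j, A i j * u j c = 0) :
    discVr r A = 0 := by
  refine IsLeast.csInf_eq ⟨⟨u, hu, ?_⟩, ?_⟩
  · simp [h, e2]
  · rintro _ ⟨u, -, rfl⟩
    exact Real.iSup_nonneg fun i => Real.sqrt_nonneg _

lemma discG_eq_zero_of_mul_eq_zero {m n : ℕ} (A : Matrix (Fin m) (Fin n) ℝ)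
    (U : Matrix (Fin n) (Fin n) ℝ) (hU : ∀ j, e2 (U j) = 1) (h : A * U = 0) : discG A = 0 := by
  refine IsLeast.csInf_eq ⟨⟨U, hU, ?_⟩, ?_⟩
  · simp [Matrix.mulVec_mulVec, h, supNorm]
  · rintro _ ⟨U, -, rfl⟩
    exact integral_nonneg fun ξ => Real.iSup_nonneg fun i => abs_nonneg _

lemma discG_eq_zero_of_sum_mul_eq_zero {m n r : ℕ} (hr : r ≤ n) (A : Matrix (Fin m) (Fin n) ℝ)
    (u : Fin n → Fin r → ℝ) (hu : ∀ j, e2 (u j) = 1) (h : ∀ i c, ∑ j, A i j * u j c = 0) :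
    discG A = 0 := by
  have hinj := Fin.castLE_injective hr
  refine discG_eq_zero_of_mul_eq_zero A (Matrix.of fun j => Function.extend (Fin.castLE hr) (u j) 0)
    (fun j => ?_) ?_
  · rw [← hu j, e2, e2]
    refine congrArg _ (Fintype.sum_of_injective _ hinj _ _ (fun l hl => ?_) fun c => ?_).symm
    · simp [Function.extend_apply' _ _ _ hl]
    · simp [hinj.extend_apply]
  · ext i l
    by_cases hl : l ∈ Set.range (Fin.castLE hr)
    · obtain ⟨c, rfl⟩ := hl
      simp [Matrix.mul_apply, hinj.extend_apply, h]
    · simp [Matrix.mul_apply, Function.extend_apply' _ _ _ hl]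

theorem stmt_10 {k : ℕ} (hk : 1 ≤ k) (a : Fin (3 * k) → ℝ)
    (l₁ l₂ l₃ : ℝ)
    (hl₁ : l₁ = ∑ i : Fin (3 * k), if (i : ℕ) < k then |a i| else 0)
    (hl₂ : l₂ = ∑ i : Fin (3 * k), if k ≤ (i : ℕ) ∧ (i : ℕ) < 2 * k then |a i| else 0)
    (hl₃ : l₃ = ∑ i : Fin (3 * k), if 2 * k ≤ (i : ℕ) then |a i| else 0)
    (htri : 2 * max (max l₁ l₂) l₃ ≤ l₁ + l₂ + l₃) :
    (∃ w : Fin (3 * k) → (Fin 2 → ℝ), (∀ j, e2 (w j) = 1) ∧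
      ∀ c : Fin 2, (∑ j, a j * w j c) = 0) ∧
    discVr 2 (Matrix.of fun (_ : Fin 1) j => a j) = 0 ∧
    discG (Matrix.of fun (_ : Fin 1) j => a j) = 0 := by
  obtain ⟨hM₁, hM₂, hM₃⟩ : l₁ ≤ max (max l₁ l₂) l₃ ∧ l₂ ≤ max (max l₁ l₂) l₃ ∧
      l₃ ≤ max (max l₁ l₂) l₃ := by simp
  have hlow : |l₁ - l₂| ≤ l₃ := abs_sub_le_iff.2 ⟨by linarith, by linarith⟩
  have hhigh : l₃ ≤ l₁ + l₂ := by linarith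
  obtain ⟨z₁, z₂, z₃, hz₁, hz₂, hz₃, hz⟩ := exists_norm_eq_one_sum_eq_zero hlow hhigh
  set v : Fin (3 * k) → ℂ := fun j => if (j : ℕ) < k then z₁ else if (j : ℕ) < 2 * k then z₂ else z₃
  have hv (j : Fin (3 * k)) : ‖v j‖ = 1 := by dsimp only [v]; split_ifs <;> assumption
  obtain ⟨w, hw, hwa⟩ := exists_norm_eq_one_sum_smul_eq_zero a hv
    (by rw [sum_abs_smul_ite, ← hl₁, ← hl₂, ← hl₃, hz])
  obtain ⟨u, hu, hua⟩ := exists_e2_eq_one_sum_mul_eq_zero_of_complex a w hw hwa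
  have hA (i : Fin 1) (c : Fin 2) : ∑ j, (Matrix.of fun (_ : Fin 1) j => a j) i j * u j c = 0 := by
    simpa using hua c
  exact ⟨⟨u, hu, hua⟩, discVr_eq_zero_of_sum_mul_eq_zero _ u hu hA,
    discG_eq_zero_of_sum_mul_eq_zero (by omega) _ u hu hA⟩
end

section
/- (Vector Komlós theorem.) For every matrix A ∈ ℝ^{m×n} whose columns all have Euclidean norm at most 1, there exist unit vectors u_1, …, u_n ∈ ℝⁿ such that max_{i∈[m]} ‖∑_{j=1}^n A_{i,j} u_j‖₂ ≤ 1; that is, disc_v(A) ≤ 1. -/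
/-!
Unit vectors `u_j` are the same as a positive semidefinite Gram matrix `X` with unit diagonal,
and the row condition reads `aᵢᵀ X aᵢ ≤ 1`. If no such `X` exists, the compact convex image of
`{X ⪰ 0, tr X ≤ n}` under `X ↦ (diag X, (aᵢᵀ X aᵢ)ᵢ)` misses the closed convex set
`{1} × (-∞, 1]ᵐ`. A functional `(φ, ψ)` exceeding `β` on the image and separating the two sets
has `ψ ≥ 0`, and testing it on rank-one matrices shows `diag q ⪯ Aᵀ diag ψ A` for
`q = β / n - φ`, while `∑ q > ∑ ψ`. This contradicts weak duality: after rescaling, `A` becomes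
a matrix `C` that does not shrink vectors, so `C` has a left inverse `L` of norm at most `1`;
Cauchy–Schwarz on `(L C)ⱼⱼ = 1` together with the column bound `‖aʲ‖ ≤ 1` gives
`qⱼ ≤ ∑ᵢ ψᵢ Lⱼᵢ²`, and summing over `j` gives `∑ q ≤ ∑ ψ`.
-/

open Finset Matrix

variable {ι κ : Type*} [Fintype ι]

theorem Matrix.PosSemidef.apply_sq_le {X : Matrix ι ι ℝ} (hX : X.PosSemidef) (j k : ι) :
    X j k ^ 2 ≤ X j j * X k k := by
  classical
  have h := LinearMap.BilinForm.apply_mul_apply_le_of_forall_zero_le (toLinearMap₂' ℝ X)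
    (fun x => by simpa [toLinearMap₂'_apply'] using hX.dotProduct_mulVec_nonneg x)
    (Pi.single j 1) (Pi.single k 1)
  simp only [toLinearMap₂'_apply', single_one_dotProduct, mulVec_single_one, col_apply] at h
  rwa [← hX.isHermitian.apply k j, star_trivial, ← sq] at h

theorem isClosed_setOf_posSemidef : IsClosed {X : Matrix ι ι ℝ | X.PosSemidef} := by
  simp only [posSemidef_iff_dotProduct_mulVec, IsHermitian, Set.ofPred_and, Set.ofPred_forall]
  exact (isClosed_eq continuous_id.matrix_conjTranspose continuous_id).inter <|
    isClosed_iInter fun x => isClosed_le continuous_const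
      (continuous_const.dotProduct (continuous_id.matrix_mulVec continuous_const))

theorem Matrix.PosSemidef.abs_apply_le_trace {X : Matrix ι ι ℝ} (hX : X.PosSemidef) (j k : ι) :
    |X j k| ≤ X.trace := by
  have hdiag (l : ι) : X l l ≤ X.trace :=
    single_le_sum (f := X.diag) (fun l _ => hX.diag_nonneg) (mem_univ l)
  refine abs_le_of_sq_le_sq ((hX.apply_sq_le j k).trans ?_) hX.trace_nonneg
  rw [sq]
  exact mul_le_mul (hdiag j) (hdiag k) hX.diag_nonneg hX.trace_nonneg

theorem isCompact_setOf_posSemidef_trace_le (c : ℝ) :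
    IsCompact {X : Matrix ι ι ℝ | X.PosSemidef ∧ X.trace ≤ c} := by
  refine (isCompact_univ_pi fun j => isCompact_univ_pi fun k => isCompact_Icc (a := -c) (b := c))
    |>.of_isClosed_subset ?_ fun X hX j _ k _ => ?_
  · exact isClosed_setOf_posSemidef.inter (isClosed_le continuous_id.matrix_trace continuous_const)
  · exact abs_le.1 ((hX.1.abs_apply_le_trace j k).trans hX.2)

theorem convex_setOf_posSemidef_trace_le (c : ℝ) :
    Convex ℝ {X : Matrix ι ι ℝ | X.PosSemidef ∧ X.trace ≤ c} := by
  rintro X ⟨hX, hXc⟩ Y ⟨hY, hYc⟩ a b ha hb hab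
  refine ⟨(hX.smul ha).add (hY.smul hb), ?_⟩
  rw [trace_add, trace_smul, trace_smul, smul_eq_mul, smul_eq_mul]
  calc a * X.trace + b * Y.trace ≤ a * c + b * c :=
        add_le_add (mul_le_mul_of_nonneg_left hXc ha) (mul_le_mul_of_nonneg_left hYc hb)
    _ = c := by rw [← add_mul, hab, one_mul]

theorem Matrix.PosSemidef.exists_eq_transpose_mul_self {X : Matrix ι ι ℝ} (hX : X.PosSemidef) :
    ∃ B : Matrix ι ι ℝ, X = Bᵀ * B := by
  classical
  open scoped MatrixOrder in
  refine ⟨CFC.sqrt X, ?_⟩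
  rw [← conjTranspose_eq_transpose_of_trivial, (CFC.sqrt_nonneg X).posSemidef.1.eq,
    CFC.sqrt_mul_sqrt_self X hX.nonneg]

def komlosConstraints (A : Matrix κ ι ℝ) : Matrix ι ι ℝ →ₗ[ℝ] (ι → ℝ) × (κ → ℝ) where
  toFun X := (X.diag, fun i => A i ⬝ᵥ X *ᵥ A i)
  map_add' X Y := by ext <;> simp [add_mulVec]
  map_smul' c X := by ext <;> simp [smul_mulVec]

theorem komlosConstraints_vecMulVec (A : Matrix κ ι ℝ) (v : ι → ℝ) :
    komlosConstraints A (vecMulVec v v) = (fun j => v j ^ 2, fun i => (A *ᵥ v) i ^ 2) := by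
  ext
  · simp [komlosConstraints, sq]
  · simp [komlosConstraints, vecMulVec_mulVec, mulVec, dotProduct_comm, sq]

variable [Fintype κ]

theorem dotProduct_sq_le (v w : ι → ℝ) : (v ⬝ᵥ w) ^ 2 ≤ (v ⬝ᵥ v) * (w ⬝ᵥ w) := by
  simpa only [dotProduct, sq] using sum_mul_sq_le_sq_mul_sq univ v w

theorem dotProduct_self_nonneg (v : ι → ℝ) : 0 ≤ v ⬝ᵥ v := by
  simpa using dotProduct_self_star_nonneg v

theorem Matrix.dotProduct_transpose_mul_self_mulVec (C : Matrix κ ι ℝ) (x : ι → ℝ) :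
    x ⬝ᵥ (Cᵀ * C) *ᵥ x = C *ᵥ x ⬝ᵥ C *ᵥ x := by
  rw [← mulVec_mulVec, dotProduct_mulVec, vecMul_transpose]

theorem Matrix.exists_contracting_leftInverse_of_expanding [DecidableEq ι] (C : Matrix κ ι ℝ)
    (hC : ∀ x, x ⬝ᵥ x ≤ C *ᵥ x ⬝ᵥ C *ᵥ x) :
    ∃ L : Matrix ι κ ℝ, L * C = 1 ∧ ∀ y, L *ᵥ y ⬝ᵥ L *ᵥ y ≤ y ⬝ᵥ y := by
  have hG : (Cᵀ * C).PosDef := by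
    refine posDef_iff_dotProduct_mulVec.2 ⟨by simpa using isHermitian_conjTranspose_mul_self C,
      fun x hx => ?_⟩
    rw [star_trivial, dotProduct_transpose_mul_self_mulVec]
    exact (dotProduct_self_star_pos_iff.2 hx).trans_le (by simpa using hC x)
  have hdet : IsUnit (Cᵀ * C).det := (isUnit_iff_isUnit_det _).1 hG.isUnit
  refine ⟨(Cᵀ * C)⁻¹ * Cᵀ, by rw [Matrix.mul_assoc, nonsing_inv_mul _ hdet], fun y => ?_⟩
  set z := ((Cᵀ * C)⁻¹ * Cᵀ) *ᵥ y
  -- `Cᵀ C z = Cᵀ y`, so `‖C z‖² = ⟪C z, y⟫ ≤ ‖C z‖ ‖y‖`; and `‖z‖ ≤ ‖C z‖`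
  have hz : C *ᵥ z ⬝ᵥ C *ᵥ z = C *ᵥ z ⬝ᵥ y := by
    rw [← dotProduct_transpose_mul_self_mulVec, mulVec_mulVec, ← Matrix.mul_assoc,
      mul_nonsing_inv _ hdet, Matrix.one_mul, dotProduct_mulVec, vecMul_transpose]
  have hCz : C *ᵥ z ⬝ᵥ C *ᵥ z ≤ y ⬝ᵥ y := by
    have hcs := dotProduct_sq_le (C *ᵥ z) y
    rw [← hz, sq] at hcs
    rcases (dotProduct_self_nonneg (C *ᵥ z)).eq_or_lt with h0 | hpos
    · exact h0 ▸ dotProduct_self_nonneg y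
    · exact le_of_mul_le_mul_left hcs hpos
  exact (hC z).trans hCz

theorem sum_le_sum_of_forall_sum_mul_sq_le_of_pos (A : Matrix κ ι ℝ)
    (hA : ∀ j, ∑ i, A i j ^ 2 ≤ 1) {p : κ → ℝ} (hp : 0 ≤ p) {q : ι → ℝ} (hq : ∀ j, 0 < q j)
    (hpq : ∀ v, ∑ j, q j * v j ^ 2 ≤ ∑ i, p i * (A *ᵥ v) i ^ 2) :
    ∑ j, q j ≤ ∑ i, p i := by
  classical
  -- `hpq` says precisely that this rescaling of `A` does not shrink vectors
  set C : Matrix κ ι ℝ := of fun i j => √(p i) * A i j / √(q j)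
  have hC (x : ι → ℝ) : x ⬝ᵥ x ≤ C *ᵥ x ⬝ᵥ C *ᵥ x := by
    have hCx : C *ᵥ x = fun i => √(p i) * (A *ᵥ fun j => x j / √(q j)) i := by
      ext i
      simp only [C, mulVec, dotProduct, of_apply, mul_sum]
      exact sum_congr rfl fun j _ => by ring
    convert hpq fun j => x j / √(q j) using 1
    · simp only [dotProduct, div_pow, Real.sq_sqrt (hq _).le]
      exact sum_congr rfl fun j _ => by field_simp [(hq j).ne']
    · simp only [hCx, dotProduct, ← sq, mul_pow, Real.sq_sqrt (hp _)]
  obtain ⟨L, hLC, hL⟩ := C.exists_contracting_leftInverse_of_expanding hC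
  have hqL (j : ι) : q j ≤ ∑ i, p i * L j i ^ 2 := by
    have h1 : ∑ i, (√(p i) * L j i) * A i j = √(q j) := by
      have hLCjj := congrFun (congrFun hLC j) j
      rw [mul_apply, one_apply_eq] at hLCjj
      rw [← mul_one √(q j), ← hLCjj, mul_sum]
      exact sum_congr rfl fun i _ => by
        simp only [C, of_apply]; field_simp [(Real.sqrt_pos.2 (hq j)).ne']
    have hcs := sum_mul_sq_le_sq_mul_sq univ (fun i => √(p i) * L j i) (fun i => A i j)
    rw [h1, Real.sq_sqrt (hq j).le] at hcs
    calc q j ≤ (∑ i, (√(p i) * L j i) ^ 2) * ∑ i, A i j ^ 2 := hcs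
      _ ≤ ∑ i, (√(p i) * L j i) ^ 2 :=
        mul_le_of_le_one_right (sum_nonneg fun _ _ => sq_nonneg _) (hA j)
      _ = ∑ i, p i * L j i ^ 2 := by simp only [mul_pow, Real.sq_sqrt (hp _)]
  have hLcol (i : κ) : ∑ j, L j i ^ 2 ≤ 1 := by
    have h := hL (Pi.single i 1)
    rw [mulVec_single_one, single_one_dotProduct, Pi.single_eq_same] at h
    simpa [dotProduct, sq] using h
  calc ∑ j, q j ≤ ∑ j, ∑ i, p i * L j i ^ 2 := sum_le_sum fun j _ => hqL j
    _ = ∑ i, p i * ∑ j, L j i ^ 2 := by rw [sum_comm]; simp only [mul_sum]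
    _ ≤ ∑ i, p i := sum_le_sum fun i _ => mul_le_of_le_one_right (hp i) (hLcol i)

theorem sum_le_sum_of_forall_sum_mul_sq_le (A : Matrix κ ι ℝ)
    (hA : ∀ j, ∑ i, A i j ^ 2 ≤ 1) {p : κ → ℝ} (hp : 0 ≤ p) {q : ι → ℝ}
    (hpq : ∀ v, ∑ j, q j * v j ^ 2 ≤ ∑ i, p i * (A *ᵥ v) i ^ 2) :
    ∑ j, q j ≤ ∑ i, p i := by
  let J := {j // 0 < q j}
  have hsum (f : ι → ℝ) (hf : ∀ j, ¬ 0 < q j → f j = 0) : ∑ j, f j = ∑ j : J, f j := by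
    rw [← Fintype.sum_subtype_add_sum_subtype (fun j => 0 < q j) f,
      sum_eq_zero fun (j : {j // ¬ 0 < q j}) _ => hf j j.2, add_zero]
  have hJ : ∑ j : J, q j ≤ ∑ i, p i := by
    refine sum_le_sum_of_forall_sum_mul_sq_le_of_pos (A.submatrix id (Subtype.val : J → ι))
      (fun j => hA j) hp (fun j => j.2) fun w => ?_
    let v : ι → ℝ := fun j => if h : 0 < q j then w ⟨j, h⟩ else 0
    have hv (j : J) : v j = w j := dif_pos j.2
    have hv₀ (j : ι) (hj : ¬ 0 < q j) : v j = 0 := dif_neg hj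
    have hAv : A *ᵥ v = A.submatrix id (↑) *ᵥ w := by
      ext i
      simp only [mulVec, dotProduct, submatrix_apply, id, ← hv]
      exact hsum _ fun j hj => by rw [hv₀ j hj, mul_zero]
    have := hpq v
    simp only [← hv]
    rwa [hsum (fun j => q j * v j ^ 2) fun j hj => by rw [hv₀ j hj]; ring, hAv] at this
  calc ∑ j, q j = ∑ j : J, q j + ∑ j : {j // ¬ 0 < q j}, q j :=
        (Fintype.sum_subtype_add_sum_subtype _ q).symm
    _ ≤ ∑ j : J, q j := add_le_of_nonpos_right (sum_nonpos fun j _ => not_lt.1 j.2)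
    _ ≤ ∑ i, p i := hJ

theorem LinearMap.exists_apply_eq_dotProduct_add_dotProduct [DecidableEq ι] [DecidableEq κ]
    (f : (ι → ℝ) × (κ → ℝ) →ₗ[ℝ] ℝ) : ∃ φ ψ, ∀ z, f z = φ ⬝ᵥ z.1 + ψ ⬝ᵥ z.2 := by
  refine ⟨fun j => (f ∘ₗ inl ℝ _ _) fun k => if j = k then 1 else 0,
    fun i => (f ∘ₗ inr ℝ _ _) fun k => if i = k then 1 else 0, fun z => ?_⟩
  have hz : f z = (f ∘ₗ inl ℝ _ _) z.1 + (f ∘ₗ inr ℝ _ _) z.2 := by simp [← map_add]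
  rw [hz, pi_apply_eq_sum_univ (f ∘ₗ inl ℝ _ _), pi_apply_eq_sum_univ (f ∘ₗ inr ℝ _ _)]
  simp only [dotProduct, smul_eq_mul, mul_comm]

theorem nonneg_of_forall_le_one_dotProduct_lt {ψ : κ → ℝ} {c : ℝ}
    (h : ∀ y ≤ 1, ψ ⬝ᵥ y < c) : 0 ≤ ψ := by
  classical
  intro i
  by_contra! hi
  replace hi : ψ i < 0 := hi
  -- at `y = 1 - t • eᵢ` with this `t ≥ 0`, `ψ ⬝ᵥ y` reaches `c`
  set t := (c - ψ ⬝ᵥ 1) / -ψ i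
  have ht : 0 ≤ t := div_nonneg (sub_nonneg.2 (h 1 le_rfl).le) (neg_nonneg.2 hi.le)
  have hψt : ψ i * t = ψ ⬝ᵥ 1 - c := by
    simp only [t]
    field_simp [hi.ne]
    ring
  have := h (1 - Pi.single i t) (sub_le_self _ (Pi.single_nonneg.2 ht))
  rw [dotProduct_sub, dotProduct_single, hψt] at this
  linarith

theorem forall_sum_mul_sq_le_of_lt_komlosConstraints (A : Matrix κ ι ℝ) {φ : ι → ℝ}
    {ψ : κ → ℝ} {β : ℝ}
    (h : ∀ X : Matrix ι ι ℝ, X.PosSemidef → X.trace ≤ Fintype.card ι →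
      β < φ ⬝ᵥ (komlosConstraints A X).1 + ψ ⬝ᵥ (komlosConstraints A X).2)
    (v : ι → ℝ) : ∑ j, (β / Fintype.card ι - φ j) * v j ^ 2 ≤ ∑ i, ψ i * (A *ᵥ v) i ^ 2 := by
  rcases eq_or_ne v 0 with rfl | hv
  · simp
  have hvv : 0 < v ⬝ᵥ v := by simpa using dotProduct_self_star_pos_iff.2 hv
  have hN : (0 : ℝ) < Fintype.card ι := by
    obtain ⟨j, -⟩ := Function.ne_iff.1 hv
    exact_mod_cast Fintype.card_pos_iff.2 ⟨j⟩
  -- test against the rank-one matrix `c • v vᵀ` of trace exactly `card ι`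
  set c := (Fintype.card ι : ℝ) / (v ⬝ᵥ v)
  have hc : 0 < c := div_pos hN hvv
  have hrank : (vecMulVec v v).PosSemidef := by simpa using posSemidef_vecMulVec_self_star v
  have hX := h (c • vecMulVec v v) (hrank.smul hc.le)
    (by rw [trace_smul, trace_vecMulVec, smul_eq_mul, div_mul_cancel₀ _ hvv.ne'])
  simp only [map_smul, komlosConstraints_vecMulVec, Prod.smul_fst, Prod.smul_snd,
    dotProduct_smul, smul_eq_mul] at hX
  rw [← mul_add, ← div_lt_iff₀' hc, div_div_eq_mul_div, mul_div_right_comm] at hX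
  have hLHS : ∑ j, (β / Fintype.card ι - φ j) * v j ^ 2
      = β / Fintype.card ι * (v ⬝ᵥ v) - φ ⬝ᵥ fun j => v j ^ 2 := by
    simp only [dotProduct, sub_mul, sum_sub_distrib, mul_sum, sq, mul_comm (φ _)]
  rw [hLHS]
  exact (sub_lt_iff_lt_add'.2 hX).le

theorem exists_posSemidef_diag_eq_one_dotProduct_mulVec_le_one (A : Matrix κ ι ℝ)
    (hA : ∀ j, ∑ i, A i j ^ 2 ≤ 1) :
    ∃ X : Matrix ι ι ℝ, X.PosSemidef ∧ (∀ j, X j j = 1) ∧ ∀ i, A i ⬝ᵥ X *ᵥ A i ≤ 1 := by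
  classical
  rcases isEmpty_or_nonempty ι with hι | hι
  · exact ⟨0, .zero, isEmptyElim, fun i => by simp⟩
  set S := {X : Matrix ι ι ℝ | X.PosSemidef ∧ X.trace ≤ Fintype.card ι}
  set T : Set ((ι → ℝ) × (κ → ℝ)) := {1} ×ˢ Set.Iic 1
  suffices ¬ Disjoint T (komlosConstraints A '' S) by
    obtain ⟨_, ⟨hdiag, hrows⟩, X, hX, rfl⟩ := Set.not_disjoint_iff.1 this
    exact ⟨X, hX.1, congrFun hdiag, hrows⟩
  intro hTS
  obtain ⟨f, α, β, hfT, hαβ, hfS⟩ := geometric_hahn_banach_closed_compact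
    ((convex_singleton 1).prod (convex_Iic 1)) (isClosed_singleton.prod isClosed_Iic)
    ((convex_setOf_posSemidef_trace_le _).linear_image _)
    ((isCompact_setOf_posSemidef_trace_le _).image
      (LinearMap.continuous_of_finiteDimensional _)) hTS
  obtain ⟨φ, ψ, hf⟩ := (f : (ι → ℝ) × (κ → ℝ) →ₗ[ℝ] ℝ).exists_apply_eq_dotProduct_add_dotProduct
  replace hf (z) : f z = φ ⬝ᵥ z.1 + ψ ⬝ᵥ z.2 := hf z
  have hψ : 0 ≤ ψ := nonneg_of_forall_le_one_dotProduct_lt (c := α - φ ⬝ᵥ 1) fun y hy => by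
    linarith [hf (1, y) ▸ hfT (1, y) ⟨rfl, hy⟩]
  have hdual := sum_le_sum_of_forall_sum_mul_sq_le A hA hψ <|
    forall_sum_mul_sq_le_of_lt_komlosConstraints A fun X hX htr =>
      hf _ ▸ hfS _ ⟨X, ⟨hX, htr⟩, rfl⟩
  rw [sum_sub_distrib, sum_const, card_univ, nsmul_eq_mul,
    mul_div_cancel₀ _ (Nat.cast_ne_zero.2 Fintype.card_ne_zero)] at hdual
  have h11 := hf (1, 1) ▸ hfT (1, 1) ⟨rfl, Set.mem_Iic.2 le_rfl⟩
  simp only [dotProduct_one] at h11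
  linarith

theorem e2_eq_sqrt_dotProduct {n : ℕ} (x : Fin n → ℝ) : e2 x = √(x ⬝ᵥ x) := by
  simp only [e2, dotProduct, sq]

theorem discV_le {m n : ℕ} {A : Matrix (Fin m) (Fin n) ℝ} {u : Fin n → Fin n → ℝ}
    (hu : ∀ j, e2 (u j) = 1) {c : ℝ} (hc : 0 ≤ c)
    (h : ∀ i, e2 (fun k => ∑ j, A i j * u j k) ≤ c) : discV A ≤ c := by
  refine (csInf_le (s := {d | ∃ u : Fin n → Fin n → ℝ, (∀ j, e2 (u j) = 1) ∧
    d = ⨆ i, e2 (fun k => ∑ j, A i j * u j k)}) ⟨0, ?_⟩ ⟨u, hu, rfl⟩).trans (Real.iSup_le h hc)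
  rintro _ ⟨u, -, rfl⟩
  exact Real.iSup_nonneg fun i => Real.sqrt_nonneg _

/-- Vector Komlós theorem (Nikolov): if all columns of A have Euclidean norm at most 1,
then there are unit vectors u_1, …, u_n with max_i ‖∑_j A_{i,j} u_j‖₂ ≤ 1;
that is, disc_v(A) ≤ 1. -/
theorem stmt_16 {m n : ℕ} (A : Matrix (Fin m) (Fin n) ℝ)
    (hcol : ∀ j, Real.sqrt (∑ i, A i j ^ 2) ≤ 1) :
    (∃ u : Fin n → (Fin n → ℝ), (∀ j, e2 (u j) = 1) ∧
      ∀ i, e2 (fun k => ∑ j, A i j * u j k) ≤ 1) ∧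
    discV A ≤ 1 := by
  obtain ⟨X, hX, hdiag, hrows⟩ := exists_posSemidef_diag_eq_one_dotProduct_mulVec_le_one A
    fun j => Real.sqrt_le_one.1 (hcol j)
  obtain ⟨B, rfl⟩ := hX.exists_eq_transpose_mul_self
  have hunit (j : Fin n) : e2 (Bᵀ j) = 1 := by
    rw [e2_eq_sqrt_dotProduct, ← Real.sqrt_one]
    exact congrArg Real.sqrt (hdiag j)
  have hrow (i : Fin m) : e2 (fun k => ∑ j, A i j * Bᵀ j k) ≤ 1 := by
    have hBA : (fun k => ∑ j, A i j * Bᵀ j k) = B *ᵥ A i := by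
      ext k
      simp only [mulVec, dotProduct, transpose_apply, mul_comm]
    rw [hBA, e2_eq_sqrt_dotProduct, ← dotProduct_transpose_mul_self_mulVec]
    exact Real.sqrt_le_one.2 (hrows i)
  exact ⟨⟨fun j => Bᵀ j, hunit, hrow⟩, discV_le hunit zero_le_one hrow⟩
end
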